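/- Fix ε > 0. Then the set { (K, f) ∈ K(H) × H : f ∈ 𝔻_ε(K) } is a Borel subset of K(H) × H. -/

import Mathlib

noncomputable section

/-- `H = [-1,1]^ℕ`, the product of countably many copies of `[-1,1]`, with the
product topology (and its Borel σ-algebra). -/
abbrev H : Type := ℕ → Set.Icc (-1 : ℝ) 1

/-- The supremum distance `‖f − g‖_∞ = sup_n |f(n) − g(n)|` on `H`. -/
noncomputable def normDist (f g : H) : ℝ := ⨆ n, |(f n : ℝ) - (g n : ℝ)|

/-- The norm diameter of `S ⊆ H`: `sup {‖f − g‖_∞ : f, g ∈ S}`. -/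
noncomputable def normDiam (S : Set H) : ℝ :=
  sSup {d : ℝ | ∃ f ∈ S, ∃ g ∈ S, d = normDist f g}

/-- `S ⊆ H` is norm separable: separable w.r.t. the metric `(f,g) ↦ ‖f − g‖_∞`. -/
def NormSeparable (S : Set H) : Prop :=
  ∃ D : Set H, D.Countable ∧ D ⊆ S ∧ ∀ f ∈ S, ∀ δ : ℝ, 0 < δ → ∃ g ∈ D, normDist f g < δ

/-- `K(H)`: the space of nonempty compact subsets of `H`. -/
def KH : Type := {K : Set H // IsCompact K ∧ K.Nonempty}

/-- The Vietoris topology on `K(H)`, generated by the sets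
`{K : K ∩ U ≠ ∅}` and `{K : K ⊆ U}` for `U ⊆ H` open. -/
instance : TopologicalSpace KH :=
  TopologicalSpace.generateFrom
    ({S : Set KH | ∃ U : Set H, IsOpen U ∧ S = {K : KH | (K.val ∩ U).Nonempty}} ∪
     {S : Set KH | ∃ U : Set H, IsOpen U ∧ S = {K : KH | K.val ⊆ U}})

/-- The Borel σ-algebra of the Vietoris topology on `K(H)`. -/
instance : MeasurableSpace KH := borel KH

/-- The Szlenk-type derivative `𝔻_ε(K)`: points of `K` all of whose open neighbourhoods `U`
have `K ∩ U` of norm diameter greater than `ε`. -/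
def Dstar (ε : ℝ) (K : Set H) : Set H :=
  {f | f ∈ K ∧ ∀ U : Set H, IsOpen U → f ∈ U → ε < normDiam (K ∩ U)}

/-!
Fix a countable basis of `H`. A point `f` lies in `𝔻_ε(K)` iff `f ∈ K` and `K ∩ B` has norm
diameter `> ε` for every basic `B ∋ f`. For a nonempty `S`, the norm diameter exceeds `ε` iff some
coordinate `n` and rational `q` make `S` meet both open sets `{h | q + ε < h n}` and `{h | h n < q}`.
"`K` meets an open set" is Vietoris-open and "`f ∈ K`" is Borel because `K` is closed, so the set is
a countable Boolean combination of Borel sets.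
-/

open Set TopologicalSpace

lemma abs_sub_apply_le_two (f g : H) (n : ℕ) : |(f n : ℝ) - g n| ≤ 2 := by
  obtain ⟨hf₁, hf₂⟩ := (f n).2
  obtain ⟨hg₁, hg₂⟩ := (g n).2
  rw [abs_le]
  constructor <;> linarith

lemma bddAbove_range_abs_sub_apply (f g : H) :
    BddAbove (range fun n => |(f n : ℝ) - g n|) :=
  ⟨2, forall_mem_range.2 (abs_sub_apply_le_two f g)⟩

lemma lt_normDist_iff {ε : ℝ} {f g : H} :
    ε < normDist f g ↔ ∃ n, ε < |(f n : ℝ) - g n| :=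
  lt_ciSup_iff (bddAbove_range_abs_sub_apply f g)

lemma bddAbove_normDist_image (S : Set H) :
    BddAbove {d : ℝ | ∃ f ∈ S, ∃ g ∈ S, d = normDist f g} := by
  refine ⟨2, ?_⟩
  rintro d ⟨f, -, g, -, rfl⟩
  exact ciSup_le (abs_sub_apply_le_two f g)

lemma le_normDiam {S : Set H} {f g : H} (hf : f ∈ S) (hg : g ∈ S) :
    normDist f g ≤ normDiam S :=
  le_csSup (bddAbove_normDist_image S) ⟨f, hf, g, hg, rfl⟩

-- Nonemptiness is needed: `normDiam ∅ = sSup ∅ = 0`.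
lemma lt_normDiam_iff {ε : ℝ} {S : Set H} (hS : S.Nonempty) :
    ε < normDiam S ↔ ∃ f ∈ S, ∃ g ∈ S, ε < normDist f g := by
  constructor
  · intro h
    obtain ⟨f, hf⟩ := hS
    obtain ⟨_, ⟨f, hf, g, hg, rfl⟩, hlt⟩ :=
      exists_lt_of_lt_csSup (s := {d | ∃ f ∈ S, ∃ g ∈ S, d = normDist f g})
        ⟨normDist f f, f, hf, f, hf, rfl⟩ h
    exact ⟨f, hf, g, hg, hlt⟩
  · rintro ⟨f, hf, g, hg, hlt⟩
    exact hlt.trans_le (le_normDiam hf hg)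

lemma normDiam_mono {S T : Set H} (hST : S ⊆ T) (hS : S.Nonempty) :
    normDiam S ≤ normDiam T := by
  obtain ⟨f, hf⟩ := hS
  refine csSup_le (s := {d | ∃ f ∈ S, ∃ g ∈ S, d = normDist f g})
    ⟨normDist f f, f, hf, f, hf, rfl⟩ ?_
  rintro _ ⟨f, hf, g, hg, rfl⟩
  exact le_normDiam (hST hf) (hST hg)

lemma lt_normDiam_iff_exists_rat {ε : ℝ} {S : Set H} (hS : S.Nonempty) :
    ε < normDiam S ↔ ∃ (n : ℕ) (q : ℚ),
      (S ∩ {h | (q : ℝ) + ε < h n}).Nonempty ∧ (S ∩ {h | (h n : ℝ) < q}).Nonempty := by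
  rw [lt_normDiam_iff hS]
  constructor
  · rintro ⟨f, hf, g, hg, hlt⟩
    obtain ⟨n, hn⟩ := lt_normDist_iff.1 hlt
    have separate : ∀ f ∈ S, ∀ g ∈ S, ε < (f n : ℝ) - g n → ∃ (n : ℕ) (q : ℚ),
        (S ∩ {h | (q : ℝ) + ε < h n}).Nonempty ∧ (S ∩ {h | (h n : ℝ) < q}).Nonempty := by
      intro f hf g hg hfg
      obtain ⟨q, hgq, hqf⟩ := exists_rat_btwn (show (g n : ℝ) < f n - ε by linarith)
      exact ⟨n, q, ⟨f, hf, show (q : ℝ) + ε < f n by linarith⟩, ⟨g, hg, hgq⟩⟩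
    rcases lt_abs.1 hn with hfg | hgf
    · exact separate f hf g hg hfg
    · exact separate g hg f hf (by rwa [neg_sub] at hgf)
  · rintro ⟨n, q, ⟨f, hf, hfq⟩, ⟨g, hg, hgq⟩⟩
    refine ⟨f, hf, g, hg, lt_normDist_iff.2 ⟨n, lt_abs.2 (Or.inl ?_)⟩⟩
    linarith [show (q : ℝ) + ε < f n from hfq, show (g n : ℝ) < q from hgq]

lemma mem_Dstar_iff_of_isTopologicalBasis {ε : ℝ} {K : Set H} {f : H} {B : Set (Set H)}
    (hB : IsTopologicalBasis B) :
    f ∈ Dstar ε K ↔ f ∈ K ∧ ∀ b ∈ B, f ∈ b → ε < normDiam (K ∩ b) := by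
  refine and_congr_right fun hf => ⟨fun h b hb hfb => h b (hB.isOpen hb) hfb, fun h U hU hfU => ?_⟩
  obtain ⟨b, hb, hfb, hbU⟩ := hB.exists_subset_of_mem_open hfU hU
  exact (h b hb hfb).trans_le (normDiam_mono (inter_subset_inter_right K hbU) ⟨f, hf, hfb⟩)

lemma measurableSet_setOf_inter_nonempty {U : Set H} (hU : IsOpen U) :
    MeasurableSet {K : KH | (K.val ∩ U).Nonempty} :=
  MeasurableSpace.measurableSet_generateFrom (isOpen_generateFrom_of_mem (Or.inl ⟨U, hU, rfl⟩))

lemma measurableSet_setOf_mem_val : MeasurableSet {p : KH × H | p.2 ∈ p.1.val} := by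
  obtain ⟨B, hBc, -, hB⟩ := exists_countable_basis H
  have hcompl : {p : KH × H | p.2 ∈ p.1.val}ᶜ =
      ⋃ b ∈ B, {K : KH | (K.val ∩ b).Nonempty}ᶜ ×ˢ b := by
    ext ⟨K, f⟩
    simp only [mem_compl_iff, mem_ofPred_eq, mem_iUnion, mem_prod, exists_prop]
    constructor
    · intro hf
      obtain ⟨b, hb, hfb, hbK⟩ := hB.exists_subset_of_mem_open hf K.2.1.isClosed.isOpen_compl
      exact ⟨b, hb, fun ⟨g, hgK, hgb⟩ => hbK hgb hgK, hfb⟩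
    · rintro ⟨b, -, hKb, hfb⟩ hf
      exact hKb ⟨f, hf, hfb⟩
  rw [← MeasurableSet.compl_iff, hcompl]
  exact .biUnion hBc fun b hb =>
    (measurableSet_setOf_inter_nonempty (hB.isOpen hb)).compl.prod (hB.isOpen hb).measurableSet

lemma measurableSet_setOf_lt_normDiam_inter (ε : ℝ) {U : Set H} (hU : IsOpen U) :
    MeasurableSet {K : KH | (K.val ∩ U).Nonempty → ε < normDiam (K.val ∩ U)} := by
  have hsplit : {K : KH | (K.val ∩ U).Nonempty → ε < normDiam (K.val ∩ U)} =
      {K | (K.val ∩ U).Nonempty}ᶜ ∪ ⋃ (n : ℕ) (q : ℚ),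
        {K : KH | (K.val ∩ (U ∩ {h | (q : ℝ) + ε < h n})).Nonempty} ∩
        {K : KH | (K.val ∩ (U ∩ {h | (h n : ℝ) < q})).Nonempty} := by
    ext K
    by_cases hK : (K.val ∩ U).Nonempty
    · simp [hK, lt_normDiam_iff_exists_rat hK, inter_assoc]
    · simp [hK]
  have continuous_apply_val (n : ℕ) : Continuous fun h : H => (h n : ℝ) := by fun_prop
  rw [hsplit]
  exact (measurableSet_setOf_inter_nonempty hU).compl.union <| .iUnion fun n => .iUnion fun q =>
    (measurableSet_setOf_inter_nonempty
        (hU.inter (isOpen_lt continuous_const (continuous_apply_val n)))).inter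
      (measurableSet_setOf_inter_nonempty
        (hU.inter (isOpen_lt (continuous_apply_val n) continuous_const)))

theorem borel_Dstar_general (ε : ℝ) :
    MeasurableSet {p : KH × H | p.2 ∈ Dstar ε p.1.val} := by
  obtain ⟨B, hBc, -, hB⟩ := exists_countable_basis H
  have hDstar : {p : KH × H | p.2 ∈ Dstar ε p.1.val} = {p | p.2 ∈ p.1.val} ∩
      ⋂ b ∈ B, (Prod.snd ⁻¹' bᶜ ∪
        Prod.fst ⁻¹' {K : KH | (K.val ∩ b).Nonempty → ε < normDiam (K.val ∩ b)}) := by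
    ext ⟨K, f⟩
    simp only [mem_ofPred_eq, mem_Dstar_iff_of_isTopologicalBasis hB, mem_inter_iff,
      mem_iInter, mem_union, mem_preimage, mem_compl_iff]
    refine and_congr_right fun hf => forall₂_congr fun b _ => ?_
    exact ⟨fun h => or_iff_not_imp_left.2 fun hfb _ => h (not_not.1 hfb),
      fun h hfb => (h.resolve_left (not_not.2 hfb)) ⟨f, hf, hfb⟩⟩
  rw [hDstar]
  exact measurableSet_setOf_mem_val.inter <| .biInter hBc fun b hb =>
    (measurable_snd (hB.isOpen hb).measurableSet.compl).union
      (measurable_fst (measurableSet_setOf_lt_normDiam_inter ε (hB.isOpen hb)))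

/-- **Lemma 4(ii).** For `ε > 0`, the set `{(K, f) ∈ K(H) × H : f ∈ 𝔻_ε(K)}` is Borel. -/
theorem borel_Dstar (ε : ℝ) (hε : 0 < ε) :
    MeasurableSet {p : KH × H | p.2 ∈ Dstar ε p.1.val} :=
  borel_Dstar_general ε
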